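/- Suppose ε ∈ (0,1) is such that D(a_t, μ) ≤ f_t(ε) for all t ∈ ℕ. Then for any fixed μ̃ ∈ (μ, 1) and any t ∈ ℕ and δ ∈ (0,1): if f_t(δ·ε) < D*(μ̃, μ), then U_t(f_t(δ)) < μ̃. -/

import Mathlib

open Set

/-- Real-valued Bernoulli KL formula. -/
noncomputable def klBerR (p q : ℝ) : ℝ :=
  p * Real.log (p / q) + (1 - p) * Real.log ((1 - p) / (1 - q))

/-- KL divergence between Bernoulli(p) and Bernoulli(q), with the convention
`D(p,q) = ⊤` when `q ∈ {0,1}` and `p ≠ q`. -/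
noncomputable def klBer (p q : ℝ) : EReal :=
  if (q = 0 ∨ q = 1) ∧ p ≠ q then ⊤ else ((klBerR p q : ℝ) : EReal)

/-- Chernoff information between Bernoulli(x) and Bernoulli(y) for `0 < x < y < 1`. -/
noncomputable def chernoffR (x y : ℝ) : ℝ :=
  ⨅ z : Set.Ioo (0:ℝ) 1, max (klBerR z x) (klBerR z y)

/-!
Write `p = a t`. The deviation bound and the monotonicity of `f t` give
`D(p, μ) ≤ f t (δ ε) < D*(μ̃, μ)`. Since `D*(μ̃, μ) ≤ D(μ̃, μ)` and `D(·, μ)` increases on `[μ, 1]`,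
this forces `p < μ̃`; since `D*(μ̃, μ) ≤ max (D(p, μ̃)) (D(p, μ))`, it forces
`f t δ < D*(μ̃, μ) ≤ D(p, μ̃)`. As `D(p, ·)` is continuous and increasing on `(p, 1)`, the set
`{m | D(p, m) ≤ f t δ}` then lies below some `m₀ < μ̃`, and so does its supremum `U t (f t δ)`.
-/

open Real InformationTheory Filter

lemma klBerR_eq_of_ne (p : ℝ) {q : ℝ} (hq₀ : q ≠ 0) (hq₁ : q ≠ 1) :
    klBerR p q = p * log p + (1 - p) * log (1 - p) - p * log q - (1 - p) * log (1 - q) := by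
  have hq₁' : 1 - q ≠ 0 := sub_ne_zero.mpr hq₁.symm
  unfold klBerR
  rcases eq_or_ne p 0 with rfl | hp₀
  · simp
  rcases eq_or_ne p 1 with rfl | hp₁
  · simp
  rw [log_div hp₀ hq₀, log_div (sub_ne_zero.mpr hp₁.symm) hq₁']
  ring

lemma klBerR_eq_klFun (p : ℝ) {q : ℝ} (hq : q ∈ Ioo (0 : ℝ) 1) :
    klBerR p q = q * klFun (p / q) + (1 - q) * klFun ((1 - p) / (1 - q)) := by
  have hq₀ : q ≠ 0 := hq.1.ne'
  have hq₁ : 1 - q ≠ 0 := sub_ne_zero.mpr hq.2.ne'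
  simp only [klBerR, klFun_apply]
  field_simp
  ring

lemma klBerR_nonneg {p q : ℝ} (hp : p ∈ Icc (0 : ℝ) 1) (hq : q ∈ Ioo (0 : ℝ) 1) :
    0 ≤ klBerR p q := by
  rw [klBerR_eq_klFun p hq]
  have h₁ := klFun_nonneg (div_nonneg hp.1 hq.1.le)
  have h₂ := klFun_nonneg (div_nonneg (sub_nonneg.mpr hp.2) (sub_nonneg.mpr hq.2.le))
  exact add_nonneg (mul_nonneg hq.1.le h₁) (mul_nonneg (sub_nonneg.mpr hq.2.le) h₂)

lemma continuous_klBerR_left {q : ℝ} (hq : q ∈ Ioo (0 : ℝ) 1) :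
    Continuous fun p => klBerR p q := by
  simp_rw [klBerR_eq_of_ne _ hq.1.ne' hq.2.ne]
  have := continuous_mul_log
  fun_prop

lemma hasDerivAt_klBerR_left {q : ℝ} (hq : q ∈ Ioo (0 : ℝ) 1) {p : ℝ} (hp : p ∈ Ioo (0 : ℝ) 1) :
    HasDerivAt (fun x => klBerR x q) (log p - log (1 - p) - (log q - log (1 - q))) p := by
  simp_rw [klBerR_eq_of_ne _ hq.1.ne' hq.2.ne]
  have h₁ := hasDerivAt_mul_log hp.1.ne'
  have h₂ := (hasDerivAt_mul_log (sub_ne_zero.mpr hp.2.ne')).comp p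
    ((hasDerivAt_id p).const_sub 1)
  exact (((h₁.add h₂).sub ((hasDerivAt_id p).mul_const (log q))).sub
    (((hasDerivAt_id p).const_sub 1).mul_const (log (1 - q)))).congr_deriv (by ring)

lemma hasDerivAt_klBerR_right (p : ℝ) {q : ℝ} (hq : q ∈ Ioo (0 : ℝ) 1) :
    HasDerivAt (klBerR p) ((q - p) / (q * (1 - q))) q := by
  have hq₀ : q ≠ 0 := hq.1.ne'
  have hq₁ : 1 - q ≠ 0 := sub_ne_zero.mpr hq.2.ne'
  have h := ((hasDerivAt_log hq.1.ne').const_mul p).add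
    (((hasDerivAt_log hq₁).comp q ((hasDerivAt_id q).const_sub 1)).const_mul (1 - p))
  refine (h.const_sub (p * log p + (1 - p) * log (1 - p))).congr_of_eventuallyEq ?_
    |>.congr_deriv ?_
  · filter_upwards [isOpen_Ioo.mem_nhds hq] with w hw
    rw [klBerR_eq_of_ne p hw.1.ne' hw.2.ne]
    simp only [Pi.add_apply, Function.comp_apply]
    ring
  · field_simp
    ring

lemma monotoneOn_klBerR_left {q : ℝ} (hq : q ∈ Ioo (0 : ℝ) 1) :
    MonotoneOn (fun p => klBerR p q) (Icc q 1) := by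
  refine monotoneOn_of_hasDerivWithinAt_nonneg (convex_Icc q 1)
    (f' := fun p => log p - log (1 - p) - (log q - log (1 - q)))
    (continuous_klBerR_left hq).continuousOn (fun p hp => ?_) (fun p hp => ?_)
  all_goals rw [interior_Icc] at hp
  · exact (hasDerivAt_klBerR_left hq ⟨hq.1.trans hp.1, hp.2⟩).hasDerivWithinAt
  · have h₁ : log q ≤ log p := log_le_log hq.1 hp.1.le
    have h₂ : log (1 - p) ≤ log (1 - q) := log_le_log (by linarith [hp.2]) (by linarith [hp.1])
    linarith

lemma monotoneOn_klBerR_right {p : ℝ} (hp : 0 ≤ p) : MonotoneOn (klBerR p) (Ioo p 1) := by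
  have hsub : Ioo p 1 ⊆ Ioo 0 1 := Ioo_subset_Ioo_left hp
  refine monotoneOn_of_hasDerivWithinAt_nonneg (convex_Ioo p 1)
    (f' := fun q => (q - p) / (q * (1 - q)))
    (fun q hq => (hasDerivAt_klBerR_right p (hsub hq)).continuousAt.continuousWithinAt)
    (fun q hq => ?_) (fun q hq => ?_)
  all_goals rw [interior_Ioo] at hq
  · exact (hasDerivAt_klBerR_right p (hsub hq)).hasDerivWithinAt
  · have := hsub hq
    exact div_nonneg (sub_nonneg.mpr hq.1.le) (mul_nonneg this.1.le (sub_nonneg.mpr this.2.le))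

lemma klBerR_self {q : ℝ} (hq : q ∈ Ioo (0 : ℝ) 1) : klBerR q q = 0 := by
  simp [klBerR, div_self hq.1.ne', div_self (sub_ne_zero.mpr hq.2.ne')]

lemma klBer_of_mem_Ioo (p : ℝ) {q : ℝ} (hq : q ∈ Ioo (0 : ℝ) 1) :
    klBer p q = (klBerR p q : EReal) :=
  if_neg fun ⟨h, _⟩ => h.elim hq.1.ne' hq.2.ne

lemma klBer_one_of_ne_one {p : ℝ} (hp : p ≠ 1) : klBer p 1 = ⊤ :=
  if_pos ⟨Or.inr rfl, hp⟩

lemma chernoffR_le {x y z : ℝ} (hx : x ∈ Ioo (0 : ℝ) 1) (hz : z ∈ Ioo (0 : ℝ) 1) :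
    chernoffR x y ≤ max (klBerR z x) (klBerR z y) := by
  refine ciInf_le ⟨0, ?_⟩ (⟨z, hz⟩ : Ioo (0 : ℝ) 1)
  rintro _ ⟨w, rfl⟩
  exact (klBerR_nonneg (Ioo_subset_Icc_self w.2) hx).trans (le_max_left _ _)

lemma chernoffR_le_of_mem_Icc {x y z : ℝ} (hx : x ∈ Ioo (0 : ℝ) 1) (hy : y ∈ Ioo (0 : ℝ) 1)
    (hz : z ∈ Icc (0 : ℝ) 1) : chernoffR x y ≤ max (klBerR z x) (klBerR z y) := by
  have hclosed : IsClosed {w : ℝ | chernoffR x y ≤ max (klBerR w x) (klBerR w y)} :=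
    isClosed_le continuous_const ((continuous_klBerR_left hx).max (continuous_klBerR_left hy))
  rw [← closure_Ioo zero_ne_one] at hz
  exact closure_minimal (fun w hw => chernoffR_le hx hw) hclosed hz

lemma chernoffR_le_klBerR {x y : ℝ} (hx : x ∈ Ioo (0 : ℝ) 1) (hy : y ∈ Ioo (0 : ℝ) 1) :
    chernoffR x y ≤ klBerR x y := by
  simpa [klBerR_self hx, klBerR_nonneg (Ioo_subset_Icc_self hx) hy]
    using chernoffR_le (y := y) hx hx

lemma chernoffR_le_klBerR_of_klBerR_lt {p x y : ℝ} (hp : p ∈ Icc (0 : ℝ) 1)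
    (hx : x ∈ Ioo (0 : ℝ) 1) (hy : y ∈ Ioo (0 : ℝ) 1) (h : klBerR p y < chernoffR x y) :
    chernoffR x y ≤ klBerR p x := by
  have := chernoffR_le_of_mem_Icc hx hy hp
  rw [le_max_iff] at this
  exact this.resolve_right h.not_ge

lemma lt_of_klBerR_lt_chernoffR {p x y : ℝ} (hp : p ≤ 1) (hy : y ∈ Ioo (0 : ℝ) 1)
    (hyx : y < x) (hx : x < 1) (h : klBerR p y < chernoffR x y) : p < x := by
  by_contra! hxp
  have hx' : x ∈ Ioo (0 : ℝ) 1 := ⟨hy.1.trans hyx, hx⟩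
  have hmono := monotoneOn_klBerR_left hy ⟨hyx.le, hx.le⟩ ⟨hyx.le.trans hxp, hp⟩ hxp
  exact (chernoffR_le_klBerR hx' hy |>.trans hmono).not_gt h

lemma exists_lt_forall_klBer_le_imp_le {p x r : ℝ} (hp : 0 ≤ p) (hpx : p < x) (hx : x < 1)
    (hr : r < klBerR p x) : ∃ m₀ < x, ∀ m ∈ Ioc p 1, klBer p m ≤ r → m ≤ m₀ := by
  have hx' : x ∈ Ioo (0 : ℝ) 1 := ⟨hp.trans_lt hpx, hx⟩
  obtain ⟨m₀, hr₀, hm₀⟩ : ∃ m₀, r < klBerR p m₀ ∧ m₀ ∈ Ioo p x :=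
    ((hasDerivAt_klBerR_right p hx').continuousAt.eventually (eventually_gt_nhds hr)
      |>.filter_mono nhdsWithin_le_nhds |>.and (Ioo_mem_nhdsLT hpx)).exists
  refine ⟨m₀, hm₀.2, fun m ⟨hpm, hm₁⟩ hmr => ?_⟩
  obtain rfl | hm₁ := hm₁.eq_or_lt
  · simp [klBer_one_of_ne_one (hpx.trans hx).ne] at hmr
  rw [klBer_of_mem_Ioo p ⟨hp.trans_lt hpm, hm₁⟩, EReal.coe_le_coe_iff] at hmr
  by_contra! hm₀m
  have hmono := monotoneOn_klBerR_right hp ⟨hm₀.1, hm₀.2.trans hx⟩ ⟨hpm, hm₁⟩ hm₀m.le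
  exact (hmono.trans hmr).not_gt hr₀

/-- Lemma: if `D(a_t, μ) ≤ f_t(ε)` for all `t`, then for any `μ̃ ∈ (μ,1)`, `t ∈ ℕ`
and `δ ∈ (0,1)`: `f_t(δ·ε) < D*(μ̃,μ)` implies `U_t(f_t(δ)) < μ̃`. -/
theorem lil_klucb_stopping_lemma
    (μ : ℝ) (hμ : μ ∈ Set.Ioo (0:ℝ) 1)
    (a : ℕ → ℝ) (ha : ∀ t, a t ∈ Set.Icc (0:ℝ) 1)
    (f : ℕ → ℝ → ℝ)
    (hf : ∀ t : ℕ, ∀ u v : ℝ, 0 < u → u ≤ v → v ≤ 1 → f t v ≤ f t u)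
    (U : ℕ → ℝ → ℝ)
    (hU : ∀ t : ℕ, ∀ r : ℝ, ∀ S : Set ℝ,
      S = {m : ℝ | m ∈ Set.Ioc (a t) 1 ∧ klBer (a t) m ≤ ((r : ℝ) : EReal)} →
      (S.Nonempty → U t r = sSup S) ∧ (¬ S.Nonempty → U t r = a t))
    (ε : ℝ) (hε : ε ∈ Set.Ioo (0:ℝ) 1)
    (hdev : ∀ t : ℕ, 0 < t → klBer (a t) μ ≤ ((f t ε : ℝ) : EReal)) :
    ∀ μt : ℝ, μt ∈ Set.Ioo μ 1 → ∀ t : ℕ, 0 < t → ∀ δ : ℝ, δ ∈ Set.Ioo (0:ℝ) 1 →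
      f t (δ * ε) < chernoffR μt μ → U t (f t δ) < μt := by
  intro μt hμt t ht δ hδ hK
  have hδε : 0 < δ * ε := mul_pos hδ.1 hε.1
  have hfε : f t ε ≤ f t (δ * ε) :=
    hf t _ _ hδε (mul_le_of_le_one_left hε.1.le hδ.2.le) hε.2.le
  have hfδ : f t δ ≤ f t (δ * ε) :=
    hf t _ _ hδε (mul_le_of_le_one_right hδ.1.le hε.2.le) hδ.2.le
  have hdevR : klBerR (a t) μ < chernoffR μt μ := by
    have := hdev t ht
    rw [klBer_of_mem_Ioo _ hμ, EReal.coe_le_coe_iff] at this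
    linarith
  have hμt' : μt ∈ Ioo (0 : ℝ) 1 := ⟨hμ.1.trans hμt.1, hμt.2⟩
  have hlt : a t < μt := lt_of_klBerR_lt_chernoffR (ha t).2 hμ hμt.1 hμt.2 hdevR
  have hr : f t δ < klBerR (a t) μt :=
    hfδ.trans_lt (hK.trans_le (chernoffR_le_klBerR_of_klBerR_lt (ha t) hμt' hμ hdevR))
  obtain ⟨m₀, hm₀, hS⟩ := exists_lt_forall_klBer_le_imp_le (ha t).1 hlt hμt.2 hr
  obtain ⟨hU₁, hU₂⟩ := hU t (f t δ) _ rfl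
  by_cases hne : {m : ℝ | m ∈ Ioc (a t) 1 ∧ klBer (a t) m ≤ (f t δ : EReal)}.Nonempty
  · rw [hU₁ hne]
    exact (csSup_le hne fun m hm => hS m hm.1 hm.2).trans_lt hm₀
  · rwa [hU₂ hne]
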